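/- Let r ≥ 1 and let W be a ℂ-subspace of R^r with p·P^r ⊆ W ⊆ q⁻¹·P^r for nonzero polynomials p and q. Then the kernel W ∩ R₋^r of the restriction of π₊ to W is finite-dimensional, the image π₊(W) has finite codimension in P^r, and finrank ℂ (W ∩ R₋^r) − finrank ℂ (P^r ⧸ π₊(W)) = finrank ℂ (W ⧸ p·P^r) − r·natDegree p; that is, the index of π₊ restricted to W equals the virtual dimension of W. -/

import Mathlib

open Polynomial

/-- The componentwise embedding `P^r → R^r` of tuples of polynomials into
tuples of rational functions. -/
noncomputable def polyToRat (r : ℕ) :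
    (Fin r → Polynomial ℂ) →ₗ[ℂ] (Fin r → RatFunc ℂ) :=
  LinearMap.pi fun k =>
    (IsScalarTower.toAlgHom ℂ (Polynomial ℂ) (RatFunc ℂ)).toLinearMap ∘ₗ
      LinearMap.proj k

/-- Componentwise multiplication by a fixed rational function `f` on `R^r`. -/
noncomputable def ratScale (r : ℕ) (f : RatFunc ℂ) :
    (Fin r → RatFunc ℂ) →ₗ[ℂ] (Fin r → RatFunc ℂ) :=
  LinearMap.pi fun k => LinearMap.mulLeft ℂ f ∘ₗ LinearMap.proj k

/-- `P^r` regarded as a subspace of `R^r`. -/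
noncomputable def polySubmodule (r : ℕ) : Submodule ℂ (Fin r → RatFunc ℂ) :=
  LinearMap.range (polyToRat r)

/-- The image `f·U` of a subspace `U ⊆ R^r` under componentwise
multiplication by the rational function `f`. -/
noncomputable def scaleSub (r : ℕ) (f : RatFunc ℂ)
    (U : Submodule ℂ (Fin r → RatFunc ℂ)) : Submodule ℂ (Fin r → RatFunc ℂ) :=
  Submodule.map (ratScale r f) U

/-! Since `π₊` is the identity on polynomials, it maps `p·P^r ⊆ R^r` isomorphically onto
`p·P^r ⊆ P^r`, a subspace of codimension `r·deg p`. Rank–nullity for the induced map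
`W ⧸ p·P^r → P^r ⧸ p·P^r` identifies its kernel with `W ∩ R₋^r` and its cokernel with
`P^r ⧸ π₊(W)`. Its source is finite-dimensional because `W ⧸ p·P^r` embeds in
`q⁻¹·P^r ⧸ p·P^r`, a quotient of `P^r ⧸ pq·P^r`. -/

open Module LinearMap

theorem LinearMap.index_eq_sub_of_disjoint_ker {F M N : Type*} [Field F] [AddCommGroup M]
    [Module F M] [AddCommGroup N] [Module F N] (S : M →ₗ[F] N) {V : Submodule F M}
    (hV : Disjoint V (ker S)) [FiniteDimensional F (M ⧸ V)]
    [FiniteDimensional F (N ⧸ V.map S)] :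
    FiniteDimensional F (ker S) ∧ FiniteDimensional F (N ⧸ range S) ∧
      (finrank F (ker S) : ℤ) - finrank F (N ⧸ range S)
        = (finrank F (M ⧸ V) : ℤ) - finrank F (N ⧸ V.map S) := by
  set φ := V.mapQ (V.map S) S (Submodule.le_comap_map S V)
  set ψ := V.mkQ ∘ₗ (ker S).subtype
  have hψ : Function.Injective ψ := by
    rw [← ker_eq_bot, ker_comp, Submodule.ker_mkQ, ← Submodule.disjoint_iff_comap_eq_bot]
    exact hV.symm
  have hker : ker φ = range ψ := by
    rw [Submodule.ker_mapQ, Submodule.comap_map_eq, Submodule.map_sup, Submodule.mkQ_map_self,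
      bot_sup_eq, range_comp, Submodule.range_subtype]
  have hcoker : ((N ⧸ V.map S) ⧸ range φ) ≃ₗ[F] N ⧸ range S := by
    rw [Submodule.range_mapQ]
    exact Submodule.quotientQuotientEquivQuotient _ _ map_le_range
  have hkerS : finrank F (ker φ) = finrank F (ker S) := by
    rw [hker, finrank_range_of_inj hψ]
  have : FiniteDimensional F (ker S) := Module.Finite.of_injective ψ hψ
  refine ⟨inferInstance, Module.Finite.equiv hcoker, ?_⟩
  have h1 := finrank_range_add_finrank_ker φ
  have h2 := Submodule.finrank_quotient_add_finrank (range φ)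
  rw [hcoker.finrank_eq] at h2
  omega

theorem Submodule.index_restrict_eq_sub_of_disjoint_ker {F M N : Type*} [Field F]
    [AddCommGroup M] [Module F M] [AddCommGroup N] [Module F N] (π : M →ₗ[F] N)
    {A W : Submodule F M} (hAW : A ≤ W) (hA : Disjoint A (ker π))
    [FiniteDimensional F (W ⧸ A.comap W.subtype)] [FiniteDimensional F (N ⧸ A.map π)] :
    FiniteDimensional F ↥(W ⊓ ker π) ∧ FiniteDimensional F (N ⧸ W.map π) ∧
      (finrank F ↥(W ⊓ ker π) : ℤ) - finrank F (N ⧸ W.map π)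
        = (finrank F (W ⧸ A.comap W.subtype) : ℤ) - finrank F (N ⧸ A.map π) := by
  set S := π ∘ₗ W.subtype
  have hmap : (A.comap W.subtype).map S = A.map π := by
    rw [Submodule.map_comp, Submodule.map_comap_subtype, inf_eq_right.mpr hAW]
  have hrange : range S = W.map π := by rw [range_comp, Submodule.range_subtype]
  have hker : ker S ≃ₗ[F] ↥(W ⊓ ker π) :=
    (LinearEquiv.ofEq _ _ (by rw [ker_comp, Submodule.comap_inf, Submodule.comap_subtype_self,
      top_inf_eq])).trans (Submodule.comapSubtypeEquivOfLe inf_le_left)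
  have hdisj : Disjoint (A.comap W.subtype) (ker S) := by
    rw [ker_comp, disjoint_iff, ← Submodule.comap_inf, disjoint_iff.mp hA, Submodule.comap_bot,
      Submodule.ker_subtype]
  have : FiniteDimensional F (N ⧸ (A.comap W.subtype).map S) := hmap ▸ inferInstance
  obtain ⟨hfinKer, hfinCoker, hindex⟩ := S.index_eq_sub_of_disjoint_ker hdisj
  rw [hrange, hmap, hker.finrank_eq] at hindex
  exact ⟨Module.Finite.equiv hker, hrange ▸ hfinCoker, hindex⟩

lemma finiteDimensional_range_of_le_ker {F M N : Type*} [Field F] [AddCommGroup M] [Module F M]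
    [AddCommGroup N] [Module F N] {f : M →ₗ[F] N} {K : Submodule F M} (hK : K ≤ ker f)
    [FiniteDimensional F (M ⧸ K)] : FiniteDimensional F (range f) := by
  rw [← Submodule.range_liftQ K f hK]
  infer_instance

lemma Submodule.finiteDimensional_quotient_comap_subtype_of_le {F M : Type*} [Field F]
    [AddCommGroup M] [Module F M] {A W Q : Submodule F M} (hWQ : W ≤ Q)
    [FiniteDimensional F (Q.map A.mkQ)] : FiniteDimensional F (W ⧸ A.comap W.subtype) := by
  have hker : ker (A.mkQ ∘ₗ W.subtype) = A.comap W.subtype := by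
    rw [ker_comp, Submodule.ker_mkQ]
  have : FiniteDimensional F (range (A.mkQ ∘ₗ W.subtype)) := by
    rw [range_comp, Submodule.range_subtype]
    exact Submodule.finiteDimensional_of_le (Submodule.map_mono hWQ)
  exact hker ▸ Module.Finite.equiv (A.mkQ ∘ₗ W.subtype).quotKerEquivRange.symm

lemma LinearMap.disjoint_map_ker_of_comp_eq_id {R M N : Type*} [Ring R] [AddCommGroup M]
    [Module R M] [AddCommGroup N] [Module R N] {ι : M →ₗ[R] N} {π : N →ₗ[R] M}
    (h : π ∘ₗ ι = LinearMap.id)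
    (K : Submodule R M) : Disjoint (K.map ι) (ker π) := by
  refine disjoint_ker.mpr ?_
  rintro _ ⟨y, -, rfl⟩ hy
  rw [← LinearMap.comp_apply, h, LinearMap.id_apply] at hy
  rw [hy, map_zero]

noncomputable def polyScale {K : Type*} [Field K] (ι : Type*) (s : K[X]) :
    (ι → K[X]) →ₗ[K] (ι → K[X]) :=
  LinearMap.piMap fun _ => LinearMap.mulLeft K s

section polyScale

variable {K ι : Type*} [Field K]

@[simp]
lemma polyScale_apply (s : K[X]) (g : ι → K[X]) (k : ι) : polyScale ι s g k = s * g k := rfl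

lemma range_polyScale (s : K[X]) :
    range (polyScale ι s) = Submodule.pi Set.univ fun _ => (Ideal.span {s}).restrictScalars K := by
  ext g
  simp only [mem_range, Submodule.mem_pi, Set.mem_univ, forall_const,
    Submodule.restrictScalars_mem, Ideal.mem_span_singleton]
  refine ⟨?_, fun hdvd => ?_⟩
  · rintro ⟨h, rfl⟩ k
    exact dvd_mul_right _ _
  · choose h hh using hdvd
    exact ⟨h, funext fun k => (hh k).symm⟩

variable [Fintype ι]

noncomputable def quotientRangePolyScaleEquiv (s : K[X]) :
    ((ι → K[X]) ⧸ range (polyScale ι s)) ≃ₗ[K] (ι → AdjoinRoot s) := by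
  classical
  exact (Submodule.quotEquivOfEq _ _ (range_polyScale s)).trans
    ((Submodule.quotientPi _).trans
      (LinearEquiv.piCongrRight fun _ => Submodule.Quotient.restrictScalarsEquiv K _))

lemma finiteDimensional_quotient_range_polyScale {s : K[X]} (hs : s ≠ 0) :
    FiniteDimensional K ((ι → K[X]) ⧸ range (polyScale ι s)) :=
  have := (AdjoinRoot.powerBasis hs).finite
  Module.Finite.equiv (quotientRangePolyScaleEquiv s).symm

lemma finrank_quotient_range_polyScale {s : K[X]} (hs : s ≠ 0) :
    finrank K ((ι → K[X]) ⧸ range (polyScale ι s)) = Fintype.card ι * s.natDegree := by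
  have := (AdjoinRoot.powerBasis hs).finite
  rw [(quotientRangePolyScaleEquiv s).finrank_eq, finrank_pi_fintype, Finset.sum_const,
    Finset.card_univ, smul_eq_mul]
  exact congrArg _ finrank_quotient_span_eq_natDegree

end polyScale

section polyToRat

variable {r : ℕ}

@[simp]
lemma polyToRat_apply (g : Fin r → ℂ[X]) (k : Fin r) :
    polyToRat r g k = algebraMap ℂ[X] (RatFunc ℂ) (g k) := rfl

@[simp]
lemma ratScale_apply (f : RatFunc ℂ) (x : Fin r → RatFunc ℂ) (k : Fin r) :
    ratScale r f x k = f * x k := rfl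

lemma scaleSub_algebraMap_polySubmodule (s : ℂ[X]) :
    scaleSub r (algebraMap ℂ[X] (RatFunc ℂ) s) (polySubmodule r)
      = (range (polyScale (Fin r) s)).map (polyToRat r) := by
  have hcomm : ratScale r (algebraMap ℂ[X] (RatFunc ℂ) s) ∘ₗ polyToRat r
      = polyToRat r ∘ₗ polyScale (Fin r) s :=
    LinearMap.ext fun g => funext fun k => by simp
  rw [scaleSub, polySubmodule, ← range_comp, hcomm, range_comp]

lemma ratScale_inv_polyToRat_polyScale_mul {q : ℂ[X]} (hq : q ≠ 0) (p : ℂ[X])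
    (g : Fin r → ℂ[X]) :
    ratScale r (algebraMap ℂ[X] (RatFunc ℂ) q)⁻¹ (polyToRat r (polyScale (Fin r) (p * q) g))
      = polyToRat r (polyScale (Fin r) p g) := by
  funext k
  have : algebraMap ℂ[X] (RatFunc ℂ) q ≠ 0 := by simpa using hq
  simp only [ratScale_apply, polyToRat_apply, polyScale_apply, map_mul]
  field_simp

lemma finiteDimensional_quotient_scaleSub {p q : ℂ[X]} (hp : p ≠ 0) (hq : q ≠ 0)
    {W : Submodule ℂ (Fin r → RatFunc ℂ)}
    (hWq : W ≤ scaleSub r (algebraMap ℂ[X] (RatFunc ℂ) q)⁻¹ (polySubmodule r)) :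
    FiniteDimensional ℂ (W ⧸ (scaleSub r (algebraMap ℂ[X] (RatFunc ℂ) p)
      (polySubmodule r)).comap W.subtype) := by
  rw [scaleSub_algebraMap_polySubmodule]
  set pP := (range (polyScale (Fin r) p)).map (polyToRat r)
  have := finiteDimensional_quotient_range_polyScale (ι := Fin r) (mul_ne_zero hp hq)
  have hker : range (polyScale (Fin r) (p * q))
      ≤ ker (pP.mkQ ∘ₗ ratScale r (algebraMap ℂ[X] (RatFunc ℂ) q)⁻¹ ∘ₗ polyToRat r) := by
    rintro _ ⟨g, rfl⟩
    simp only [mem_ker, coe_comp, Function.comp_apply, ratScale_inv_polyToRat_polyScale_mul hq,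
      Submodule.mkQ_apply, Submodule.Quotient.mk_eq_zero]
    exact Submodule.mem_map_of_mem (mem_range_self _ g)
  have : FiniteDimensional ℂ
      ((scaleSub r (algebraMap ℂ[X] (RatFunc ℂ) q)⁻¹ (polySubmodule r)).map pP.mkQ) := by
    have := finiteDimensional_range_of_le_ker hker
    rwa [range_comp, range_comp] at this
  exact Submodule.finiteDimensional_quotient_comap_subtype_of_le hWq

lemma piPlus_comp_polyToRat {piPlus : (Fin r → RatFunc ℂ) →ₗ[ℂ] (Fin r → ℂ[X])}
    (hpi : ∀ (f : Fin r → RatFunc ℂ) (k : Fin r), piPlus f k = (f k).num / (f k).denom) :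
    piPlus ∘ₗ polyToRat r = LinearMap.id :=
  LinearMap.ext fun g => funext fun k => by simp [hpi]

end polyToRat

theorem index_piPlus_eq_vdim_general (r : ℕ)
    (piPlus : (Fin r → RatFunc ℂ) →ₗ[ℂ] (Fin r → Polynomial ℂ))
    (hpi : ∀ (f : Fin r → RatFunc ℂ) (k : Fin r),
      piPlus f k = (f k).num / (f k).denom)
    (W : Submodule ℂ (Fin r → RatFunc ℂ)) (p q : Polynomial ℂ)
    (hp : p ≠ 0) (hq : q ≠ 0)
    (hpW : scaleSub r (algebraMap (Polynomial ℂ) (RatFunc ℂ) p)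
      (polySubmodule r) ≤ W)
    (hWq : W ≤ scaleSub r (algebraMap (Polynomial ℂ) (RatFunc ℂ) q)⁻¹
      (polySubmodule r)) :
    letI pP : Submodule ℂ (Fin r → RatFunc ℂ) :=
      scaleSub r (algebraMap (Polynomial ℂ) (RatFunc ℂ) p) (polySubmodule r)
    FiniteDimensional ℂ ↥(W ⊓ LinearMap.ker piPlus) ∧
    FiniteDimensional ℂ ((Fin r → Polynomial ℂ) ⧸ Submodule.map piPlus W) ∧
    (Module.finrank ℂ ↥(W ⊓ LinearMap.ker piPlus) : ℤ)
        - Module.finrank ℂ ((Fin r → Polynomial ℂ) ⧸ Submodule.map piPlus W)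
      = (Module.finrank ℂ (↥W ⧸ Submodule.comap W.subtype pP) : ℤ)
        - (r : ℤ) * p.natDegree := by
  set pP := scaleSub r (algebraMap ℂ[X] (RatFunc ℂ) p) (polySubmodule r)
  have hpP : pP = (range (polyScale (Fin r) p)).map (polyToRat r) :=
    scaleSub_algebraMap_polySubmodule p
  have hπ := piPlus_comp_polyToRat hpi
  have hmap : pP.map piPlus = range (polyScale (Fin r) p) := by
    rw [hpP, ← Submodule.map_comp, hπ, Submodule.map_id]
  have hdisj : Disjoint pP (ker piPlus) := hpP ▸ disjoint_map_ker_of_comp_eq_id hπ _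
  have := finiteDimensional_quotient_scaleSub hp hq hWq
  have : FiniteDimensional ℂ ((Fin r → ℂ[X]) ⧸ pP.map piPlus) :=
    hmap ▸ finiteDimensional_quotient_range_polyScale hp
  obtain ⟨hker, hcoker, hindex⟩ :=
    Submodule.index_restrict_eq_sub_of_disjoint_ker piPlus hpW hdisj
  refine ⟨hker, hcoker, ?_⟩
  rw [hindex, hmap, finrank_quotient_range_polyScale hp, Fintype.card_fin, Nat.cast_mul]

/-- let `π₊ : R^r → P^r` be the ℂ-linear map applying
componentwise the "polynomial part" `f ↦ f₊`, where `f₊` is the polynomial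
quotient of the numerator of `f` by its denominator (so that `f − f₊` is
proper).  If `p·P^r ⊆ W ⊆ q⁻¹·P^r` for nonzero polynomials `p, q`, then the
kernel `W ∩ R₋^r` of `π₊` restricted to `W` is finite-dimensional, the image
`π₊(W)` has finite codimension in `P^r`, and the index
`finrank (W ∩ R₋^r) − finrank (P^r ⧸ π₊(W))` equals the virtual dimension
`finrank (W ⧸ p·P^r) − r·deg p` of `W`. -/
theorem index_piPlus_eq_vdim (r : ℕ) (hr : 1 ≤ r)
    (piPlus : (Fin r → RatFunc ℂ) →ₗ[ℂ] (Fin r → Polynomial ℂ))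
    (hpi : ∀ (f : Fin r → RatFunc ℂ) (k : Fin r),
      piPlus f k = (f k).num / (f k).denom)
    (W : Submodule ℂ (Fin r → RatFunc ℂ)) (p q : Polynomial ℂ)
    (hp : p ≠ 0) (hq : q ≠ 0)
    (hpW : scaleSub r (algebraMap (Polynomial ℂ) (RatFunc ℂ) p)
      (polySubmodule r) ≤ W)
    (hWq : W ≤ scaleSub r (algebraMap (Polynomial ℂ) (RatFunc ℂ) q)⁻¹
      (polySubmodule r)) :
    letI pP : Submodule ℂ (Fin r → RatFunc ℂ) :=
      scaleSub r (algebraMap (Polynomial ℂ) (RatFunc ℂ) p) (polySubmodule r)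
    FiniteDimensional ℂ ↥(W ⊓ LinearMap.ker piPlus) ∧
    FiniteDimensional ℂ ((Fin r → Polynomial ℂ) ⧸ Submodule.map piPlus W) ∧
    (Module.finrank ℂ ↥(W ⊓ LinearMap.ker piPlus) : ℤ)
        - Module.finrank ℂ ((Fin r → Polynomial ℂ) ⧸ Submodule.map piPlus W)
      = (Module.finrank ℂ (↥W ⧸ Submodule.comap W.subtype pP) : ℤ)
        - (r : ℤ) * p.natDegree :=
  index_piPlus_eq_vdim_general r piPlus hpi W p q hp hq hpW hWq
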